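/- Let Y : [t₁, t₂] → ℝ be continuous and nonnegative, K, H ≥ 0 constants, with Y(t) ≤ e^{K(t-t₀)}(Y(t₀) + H) whenever t₁ ≤ t₀ ≤ t ≤ t₂. Suppose ∫_{t₁}^{t₂} Y(s) ds ≤ A. Then for every λ ∈ (0,1) and every t ∈ [(1-λ)t₁ + λt₂, t₂], Y(t) ≤ e^{K(t₂-t₁)}·(A/(λ(t₂-t₁)) + H). -/
import Mathlib


open Real Set intervalIntegral MeasureTheory

/-- Pigeonhole/mean-value argument converting a space-time integral bound into
a pointwise-in-time bound on the later portion of the interval. -/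
theorem stmt_17 (t₁ t₂ K H A : ℝ) (ht : t₁ < t₂) (hK : 0 ≤ K) (hH : 0 ≤ H)
    (Y : ℝ → ℝ) (hYc : ContinuousOn Y (Set.Icc t₁ t₂))
    (hYnonneg : ∀ t ∈ Set.Icc t₁ t₂, 0 ≤ Y t)
    (hgron : ∀ t₀ t, t₁ ≤ t₀ → t₀ ≤ t → t ≤ t₂ →
      Y t ≤ Real.exp (K * (t - t₀)) * (Y t₀ + H))
    (hint : (∫ s in t₁..t₂, Y s) ≤ A) :
    ∀ lam : ℝ, 0 < lam → lam < 1 →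
      ∀ t ∈ Set.Icc ((1 - lam) * t₁ + lam * t₂) t₂,
        Y t ≤ Real.exp (K * (t₂ - t₁)) * (A / (lam * (t₂ - t₁)) + H) := by
  intro lam hl0 hl1 t htmem
  set tl : ℝ := (1 - lam) * t₁ + lam * t₂ with htl
  have h1l : t₁ < tl := by nlinarith
  have h2l : tl < t₂ := by nlinarith
  have hsub : Set.Icc t₁ tl ⊆ Set.Icc t₁ t₂ :=
    Set.Icc_subset_Icc le_rfl h2l.le
  -- minimum on [t₁, tl]
  obtain ⟨t₀, ht₀mem, ht₀min⟩ :=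
    IsCompact.exists_isMinOn isCompact_Icc (Set.nonempty_Icc.mpr h1l.le)
      (hYc.mono hsub)
  obtain ⟨ht₀1, ht₀2⟩ := ht₀mem
  have hint1 : IntervalIntegrable Y volume t₁ tl :=
    (hYc.mono hsub).intervalIntegrable_of_Icc h1l.le
  have hint2 : IntervalIntegrable Y volume tl t₂ :=
    (hYc.mono (Set.Icc_subset_Icc h1l.le le_rfl)).intervalIntegrable_of_Icc h2l.le
  -- lower bound for integral on [t₁, tl]
  have hlow : Y t₀ * (tl - t₁) ≤ ∫ s in t₁..tl, Y s := by
    have := intervalIntegral.integral_mono_on h1l.le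
      (_root_.intervalIntegrable_const (c := Y t₀)) hint1
      (fun x hx => ht₀min hx)
    simpa [mul_comm] using this
  have h2nonneg : 0 ≤ ∫ s in tl..t₂, Y s :=
    intervalIntegral.integral_nonneg h2l.le
      (fun x hx => hYnonneg x ⟨h1l.le.trans hx.1, hx.2⟩)
  have hsplit : (∫ s in t₁..tl, Y s) + (∫ s in tl..t₂, Y s) = ∫ s in t₁..t₂, Y s :=
    intervalIntegral.integral_add_adjacent_intervals hint1 hint2
  have hYt₀ : Y t₀ * (tl - t₁) ≤ A := by linarith
  have htl1 : tl - t₁ = lam * (t₂ - t₁) := by ring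
  have hpos : 0 < lam * (t₂ - t₁) := mul_pos hl0 (by linarith)
  have hYt₀' : Y t₀ ≤ A / (lam * (t₂ - t₁)) := by
    rw [le_div_iff₀ hpos]; rwa [htl1] at hYt₀
  have hgr := hgron t₀ t ht₀1 (ht₀2.trans htmem.1) htmem.2
  have hexp : Real.exp (K * (t - t₀)) ≤ Real.exp (K * (t₂ - t₁)) := by
    apply Real.exp_le_exp.mpr
    have : t - t₀ ≤ t₂ - t₁ := by linarith [htmem.2]
    nlinarith
  have hY0 : 0 ≤ Y t₀ := hYnonneg t₀ (hsub ⟨ht₀1, ht₀2⟩)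
  calc Y t ≤ Real.exp (K * (t - t₀)) * (Y t₀ + H) := hgr
    _ ≤ Real.exp (K * (t₂ - t₁)) * (Y t₀ + H) := by
        apply mul_le_mul_of_nonneg_right hexp; linarith
    _ ≤ Real.exp (K * (t₂ - t₁)) * (A / (lam * (t₂ - t₁)) + H) := by
        apply mul_le_mul_of_nonneg_left _ (Real.exp_nonneg _)
        linarith
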